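/- arXiv:1206.4245 — 3 statements merged into one kernel-verified Lean document; each statement's English description precedes it below -/
import Mathlib

section
/- For any injective code c_n from A^n to binary strings (strictly lossless code), the expected codeword length under any probability distribution μ on A^n is at least H(μ) - log₂(log₂(|A|^n) + 1) - log₂ e; in particular, there is no sequence of injective codes whose expected length is asymptotically below the entropy rate for an i.i.d. source. -/
/-! Gibbs' inequality against the weights `2^{-ℓ(x)}`, `ℓ(x)` the length of `c x`, gives
`H(μ) ≤ E[ℓ] + log₂ S` with `S = ∑ₓ 2^{-ℓ(x)}`. An injective code has at most `2^k` codewords of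
length `k`, so with `M = |A|^n` and `K = ⌊log₂ M⌋ + 1` the codewords shorter than `K` contribute
at most `K` to `S` and the others at most `M 2^{-K} < 1`. Hence
`S ≤ log₂ M + 2 ≤ e (log₂ M + 1)`. -/

open Finset Real

lemma Real.mul_log_inv_le_mul_log_inv_add_sub {a b : ℝ} (ha : 0 ≤ a) (hb : 0 < b) :
    a * log a⁻¹ ≤ a * log b⁻¹ + (b - a) := by
  rcases ha.eq_or_lt with rfl | ha
  · simpa using hb.le
  have hlog : log (b / a) ≤ b / a - 1 := log_le_sub_one_of_pos (div_pos hb ha)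
  rw [log_div hb.ne' ha.ne'] at hlog
  have hmul := mul_le_mul_of_nonneg_left hlog ha.le
  rw [mul_sub, mul_sub, mul_div_cancel₀ _ ha.ne'] at hmul
  simp only [log_inv]
  linarith

theorem Real.sum_mul_logb_inv_le {ι : Type*} [Fintype ι] {b : ℝ} (hb : 1 < b) (μ q : ι → ℝ)
    (hμ0 : ∀ x, 0 ≤ μ x) (hμ1 : ∑ x, μ x = 1) (hq : ∀ x, 0 < q x) :
    ∑ x, μ x * logb b (μ x)⁻¹ ≤ ∑ x, μ x * logb b (q x)⁻¹ + logb b (∑ x, q x) := by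
  suffices ∑ x, μ x * log (μ x)⁻¹ ≤ ∑ x, μ x * log (q x)⁻¹ + log (∑ x, q x) by
    simp only [logb, ← mul_div_assoc, ← sum_div, ← add_div]
    exact div_le_div_of_nonneg_right this (log_pos hb).le
  set S := ∑ x, q x
  have hS : 0 < S := by
    have : (univ : Finset ι).Nonempty := nonempty_of_sum_ne_zero (hμ1.symm ▸ one_ne_zero)
    exact sum_pos (fun x _ => hq x) this
  have hterm (x : ι) :
      μ x * log (μ x)⁻¹ ≤ μ x * log (q x)⁻¹ + μ x * log S + (q x / S - μ x) := by
    have := mul_log_inv_le_mul_log_inv_add_sub (hμ0 x) (div_pos (hq x) hS)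
    rw [inv_div, log_div hS.ne' (hq x).ne', mul_sub] at this
    rw [log_inv (q x)]
    linarith
  have hnorm : ∑ x, (q x / S - μ x) = 0 := by
    rw [sum_sub_distrib, ← sum_div, div_self hS.ne', hμ1, sub_self]
  calc ∑ x, μ x * log (μ x)⁻¹
      ≤ ∑ x, (μ x * log (q x)⁻¹ + μ x * log S + (q x / S - μ x)) := sum_le_sum fun x _ => hterm x
    _ = ∑ x, μ x * log (q x)⁻¹ + log S := by
      rw [sum_add_distrib, sum_add_distrib, hnorm, ← sum_mul, hμ1, one_mul, add_zero]

theorem card_filter_length_eq_le {α B : Type*} [Fintype α] [Fintype B] {c : α → List B}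
    (hc : Function.Injective c) (k : ℕ) :
    #{x | (c x).length = k} ≤ Fintype.card B ^ k := by
  rw [← Fintype.card_subtype, ← card_vector]
  exact Fintype.card_le_of_injective (fun x => ⟨c x, x.2⟩)
    fun x y h => Subtype.ext (hc (congrArg Subtype.val h))

theorem sum_inv_card_pow_length_le {α B : Type*} [Fintype α] [Fintype B] [Nonempty B]
    {c : α → List B} (hc : Function.Injective c) (K : ℕ) :
    ∑ x, ((Fintype.card B : ℝ) ^ (c x).length)⁻¹
      ≤ K + Fintype.card α / (Fintype.card B : ℝ) ^ K := by
  have hb : 1 ≤ (Fintype.card B : ℝ) := Nat.one_le_cast.2 Fintype.card_pos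
  rw [← sum_filter_add_sum_filter_not univ (fun x => (c x).length < K)]
  gcongr
  · rw [← sum_fiberwise_of_maps_to (g := fun x => (c x).length) (t := range K)
      (fun x hx => mem_range.2 (mem_filter.1 hx).2)]
    calc _ = ∑ k ∈ range K, (#{x | (c x).length = k} : ℝ) * ((Fintype.card B : ℝ) ^ k)⁻¹ := by
          refine sum_congr rfl fun k hk => ?_
          rw [filter_filter, sum_congr rfl fun x hx => by rw [(mem_filter.1 hx).2.2], sum_const,
            nsmul_eq_mul]
          congr 3
          ext x
          simp only [mem_filter, mem_univ, true_and, and_iff_right_iff_imp]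
          exact fun h => h ▸ mem_range.1 hk
      _ ≤ ∑ k ∈ range K, (1 : ℝ) := by
          refine sum_le_sum fun k _ => ?_
          rw [← div_eq_mul_inv, div_le_one (by positivity)]
          exact_mod_cast card_filter_length_eq_le hc k
      _ = K := by simp
  · calc _ ≤ ∑ x ∈ {x | ¬(c x).length < K}, ((Fintype.card B : ℝ) ^ K)⁻¹ := by
          refine sum_le_sum fun x hx => ?_
          gcongr
          exact not_lt.1 (mem_filter.1 hx).2
      _ ≤ Fintype.card α / (Fintype.card B : ℝ) ^ K := by
          rw [sum_const, nsmul_eq_mul, div_eq_mul_inv]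
          gcongr
          exact_mod_cast card_filter_le _ _

theorem sum_inv_two_pow_length_le {α : Type*} [Fintype α] {c : α → List Bool}
    (hc : Function.Injective c) :
    ∑ x, ((2 : ℝ) ^ (c x).length)⁻¹ ≤ logb 2 (Fintype.card α) + 2 := by
  set M := Fintype.card α
  have hsplit := sum_inv_card_pow_length_le hc (Nat.log 2 M + 1)
  simp only [Fintype.card_bool, Nat.cast_ofNat] at hsplit
  have htail : (M : ℝ) / 2 ^ (Nat.log 2 M + 1) ≤ 1 := by
    rw [div_le_one (by positivity)]
    exact_mod_cast (Nat.lt_pow_succ_log_self one_lt_two M).le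
  have hlog : (Nat.log 2 M : ℝ) ≤ logb 2 M := natLog_le_logb M 2
  push_cast at hsplit
  linarith

theorem stmt0_general {A : Type*} [Fintype A] (n : ℕ)
    (c : (Fin n → A) → List Bool) (hc : Function.Injective c)
    (μ : (Fin n → A) → ℝ) (hμ0 : ∀ x, 0 ≤ μ x) (hμ1 : ∑ x, μ x = 1) :
    (∑ x, μ x * Real.logb 2 (μ x)⁻¹)
      - Real.logb 2 (Real.logb 2 ((Fintype.card A : ℝ) ^ n) + 1)
      - Real.logb 2 (Real.exp 1)
    ≤ ∑ x, μ x * ((c x).length : ℝ) := by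
  set L := logb 2 ((Fintype.card A : ℝ) ^ n)
  have hcard : logb 2 (Fintype.card (Fin n → A)) = L := by simp [L]
  have hL : 0 ≤ L := hcard ▸ div_nonneg (log_natCast_nonneg _) (log_pos one_lt_two).le
  have hgibbs := sum_mul_logb_inv_le one_lt_two μ (fun x => ((2 : ℝ) ^ (c x).length)⁻¹) hμ0 hμ1
    (fun x => by positivity)
  simp only [inv_inv, logb_pow, logb_self_eq_one one_lt_two, mul_one] at hgibbs
  have hkraft : ∑ x, ((2 : ℝ) ^ (c x).length)⁻¹ ≤ exp 1 * (L + 1) := by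
    have he : 2 ≤ exp 1 := by linarith [add_one_le_exp (1 : ℝ)]
    calc _ ≤ L + 2 := hcard ▸ sum_inv_two_pow_length_le hc
      _ ≤ exp 1 * (L + 1) := by nlinarith
  have hpos : 0 < ∑ x, ((2 : ℝ) ^ (c x).length)⁻¹ := by
    have : (univ : Finset (Fin n → A)).Nonempty :=
      nonempty_of_sum_ne_zero (hμ1.symm ▸ one_ne_zero)
    exact sum_pos (fun x _ => by positivity) this
  have hlog := logb_le_logb_of_le one_lt_two hpos hkraft
  rw [logb_mul (exp_pos 1).ne' (by positivity)] at hlog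
  linarith

/-- Lower bound on the expected codeword length of any one-to-one (injective,
strictly lossless) code `c` on `A^n`: the expected length is at least
`H(μ) - log₂(log₂(|A|^n) + 1) - log₂ e`. -/
theorem stmt0 {A : Type*} [Fintype A] [Nonempty A] (n : ℕ)
    (c : (Fin n → A) → List Bool) (hc : Function.Injective c)
    (μ : (Fin n → A) → ℝ) (hμ0 : ∀ x, 0 ≤ μ x) (hμ1 : ∑ x, μ x = 1) :
    (∑ x, μ x * Real.logb 2 (μ x)⁻¹)
      - Real.logb 2 (Real.logb 2 ((Fintype.card A : ℝ) ^ n) + 1)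
      - Real.logb 2 (Real.exp 1)
    ≤ ∑ x, μ x * ((c x).length : ℝ) :=
  stmt0_general n c hc μ hμ0 hμ1
end

section
/- Among all measurable sets S ⊆ ℝ^d with P(Z ∈ S) ≥ 1 − p_e, where Z is a nondegenerate Gaussian with mean θ̂ and covariance Σ, a set of minimal Lebesgue measure is the ellipsoid {φ : (φ−θ̂)ᵀ Σ^{−1} (φ−θ̂) ≤ t} for the appropriate threshold t making the probability exactly 1 − p_e. -/
/-!
Substituting `z = θ + L x` with `L = √Σ` turns the density of `N(θ, Σ)` into `|det L|⁻¹` times the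
standard Gaussian density and the ellipsoid `{(z - θ)ᵀ Σ⁻¹ (z - θ) ≤ t}` into the ball
`{‖x‖² ≤ t}`. The Gaussian mass of that ball is continuous in `t`, because spheres are null, and
increases from `0` to `1`, so some `t` gives mass exactly `1 - p_e`.

The ellipsoid `E` is a superlevel set `{pdf ≥ c}` with `c > 0`, and such a set has the least
measure among sets `S` of at least its mass: the density is `≥ c` on `E \ S` and `< c` on `S \ E`,
so `c |E \ S| ≤ ∫_{E \ S} pdf ≤ ∫_{S \ E} pdf ≤ c |S \ E|`.
-/

open Real MeasureTheory Matrix Filter Set Topology Module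

section Sublevel

variable {X : Type*} [MeasurableSpace X] {μ : Measure X} {q g : X → ℝ}

theorem continuous_setIntegral_sublevel (hq : Measurable q)
    (hnull : ∀ t, μ {x | q x = t} = 0) (hg : Integrable g μ) :
    Continuous fun t => ∫ x in {x | q x ≤ t}, g x ∂μ := by
  have hmeas (t : ℝ) : MeasurableSet {x | q x ≤ t} := hq measurableSet_Iic
  simp only [← integral_indicator (hmeas _)]
  refine continuous_iff_continuousAt.2 fun t₀ => continuousAt_of_dominated
    (.of_forall fun t => hg.aestronglyMeasurable.indicator (hmeas t))
    (.of_forall fun t => .of_forall fun x => norm_indicator_le_norm_self g x) hg.norm ?_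
  refine measure_mono_null (fun x hx => ?_) (hnull t₀)
  by_contra hne
  have hind : (fun t => {x | q x ≤ t}.indicator g x) = (Ici (q x)).indicator fun _ => g x := by
    ext t; simp [indicator_apply]
  have hcont : ContinuousAt (fun t => {x | q x ≤ t}.indicator g x) t₀ := by
    rw [hind]
    exact continuousOn_const.continuousAt_indicator (by simpa [frontier_Ici] using Ne.symm hne)
  exact hx hcont

theorem tendsto_setIntegral_sublevel_atTop (hq : Measurable q) (hg : Integrable g μ) :
    Tendsto (fun t => ∫ x in {x | q x ≤ t}, g x ∂μ) atTop (𝓝 (∫ x, g x ∂μ)) := by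
  have hunion : (⋃ t : ℝ, {x | q x ≤ t}) = univ :=
    eq_univ_of_forall fun x => mem_iUnion.2 ⟨q x, le_refl (q x)⟩
  have hmono : Monotone fun t : ℝ => {x | q x ≤ t} := fun s t hst x hx => le_trans hx hst
  simpa [hunion] using tendsto_setIntegral_of_monotone (μ := μ) (f := g)
    (s := fun t => {x | q x ≤ t}) (fun t => hq measurableSet_Iic) hmono
    (by rw [hunion]; exact hg.integrableOn)

theorem exists_setIntegral_sublevel_eq (hq : Measurable q) (hnull : ∀ t, μ {x | q x = t} = 0)
    (hg : Integrable g μ) (hq_nonneg : ∀ x, 0 ≤ q x) {c : ℝ} (hc_nonneg : 0 ≤ c)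
    (hc : c < ∫ x, g x ∂μ) : ∃ t, ∫ x in {x | q x ≤ t}, g x ∂μ = c := by
  have hempty : {x | q x ≤ -1} = ∅ :=
    eq_empty_of_forall_notMem fun x hx => by linarith [hq_nonneg x, mem_ofPred.1 hx]
  refine mem_range_of_exists_le_of_exists_ge (continuous_setIntegral_sublevel hq hnull hg)
    ⟨-1, by simpa [hempty] using hc_nonneg⟩ ?_
  exact ((tendsto_setIntegral_sublevel_atTop hq hg).eventually (eventually_ge_nhds hc)).exists

end Sublevel

section Bathtub

variable {X : Type*} [MeasurableSpace X] {μ : Measure X}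

theorem measure_superlevel_le_of_setIntegral_le {f : X → ℝ} (hf : Integrable f μ)
    (hfm : Measurable f) {c : ℝ} (hc : 0 < c) {S : Set X} (hS : MeasurableSet S)
    (hle : ∫ x in {x | c ≤ f x}, f x ∂μ ≤ ∫ x in S, f x ∂μ) : μ {x | c ≤ f x} ≤ μ S := by
  set E := {x | c ≤ f x}
  rcases eq_or_ne (μ S) ⊤ with hS_top | hS_top
  · exact hS_top ▸ le_top
  have hE : MeasurableSet E := measurableSet_le measurable_const hfm
  have hES_top : μ (E \ S) ≠ ⊤ :=
    measure_ne_top_of_subset sdiff_subset (hf.measure_ge_lt_top hc).ne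
  have hSE_top : μ (S \ E) ≠ ⊤ := measure_ne_top_of_subset sdiff_subset hS_top
  have hdiff : ∫ x in E \ S, f x ∂μ ≤ ∫ x in S \ E, f x ∂μ := by
    have hE_split := integral_inter_add_sdiff hS (hf.integrableOn (s := E))
    have hS_split := integral_inter_add_sdiff hE (hf.integrableOn (s := S))
    rw [inter_comm] at hS_split
    linarith
  have hreal : c * μ.real (E \ S) ≤ c * μ.real (S \ E) := calc
    c * μ.real (E \ S) ≤ ∫ x in E \ S, f x ∂μ :=
      setIntegral_ge_of_const_le_real (hE.diff hS) hES_top (fun x hx => hx.1) hf.integrableOn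
    _ ≤ ∫ x in S \ E, f x ∂μ := hdiff
    _ ≤ ∫ x in S \ E, c ∂μ := setIntegral_mono_on hf.integrableOn (integrableOn_const hSE_top)
      (hS.diff hE) fun x hx => (not_le.1 hx.2).le
    _ = c * μ.real (S \ E) := by rw [setIntegral_const, smul_eq_mul, mul_comm]
  have hmeasure : μ (E \ S) ≤ μ (S \ E) :=
    (ENNReal.toReal_le_toReal hES_top hSE_top).1 (le_of_mul_le_mul_left hreal hc)
  calc μ E = μ (E ∩ S) + μ (E \ S) := (measure_inter_add_sdiff E hS).symm
    _ ≤ μ (S ∩ E) + μ (S \ E) := by rw [inter_comm]; gcongr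
    _ = μ S := measure_inter_add_sdiff S hE

end Bathtub

section AffineChangeOfVariables

variable {E : Type*} [NormedAddCommGroup E] [NormedSpace ℝ E] [FiniteDimensional ℝ E]
  [MeasurableSpace E] [BorelSpace E] (μ : Measure E) [μ.IsAddHaarMeasure]
  {G : Type*} [NormedAddCommGroup G] [NormedSpace ℝ G] (L : E ≃L[ℝ] E) (a : E) {s : Set E}

theorem integrableOn_image_add_continuousLinearEquiv_iff (hs : MeasurableSet s) (F : E → G) :
    IntegrableOn F ((a + L ·) '' s) μ ↔
      IntegrableOn (fun x => |(L : E →L[ℝ] E).det| • F (a + L x)) s μ :=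
  integrableOn_image_iff_integrableOn_abs_det_fderiv_smul μ hs
    (fun _ _ => ((L : E →L[ℝ] E).hasFDerivAt.const_add a).hasFDerivWithinAt)
    ((add_right_injective a).comp L.injective).injOn F

theorem setIntegral_image_add_continuousLinearEquiv (hs : MeasurableSet s) (F : E → G) :
    ∫ z in (a + L ·) '' s, F z ∂μ = ∫ x in s, |(L : E →L[ℝ] E).det| • F (a + L x) ∂μ :=
  integral_image_eq_integral_abs_det_fderiv_smul μ hs
    (fun _ _ => ((L : E →L[ℝ] E).hasFDerivAt.const_add a).hasFDerivWithinAt)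
    ((add_right_injective a).comp L.injective).injOn F

end AffineChangeOfVariables

section StdGaussian

variable {V : Type*} [NormedAddCommGroup V] [InnerProductSpace ℝ V] [FiniteDimensional ℝ V]
  [MeasurableSpace V] [BorelSpace V]

noncomputable def stdGaussianPDF (x : V) : ℝ :=
  (2 * π) ^ (-(finrank ℝ V : ℝ) / 2) * exp (-(1 / 2) * ‖x‖ ^ 2)

theorem integral_stdGaussianPDF : ∫ x : V, stdGaussianPDF x = 1 := by
  unfold stdGaussianPDF
  rw [integral_const_mul,
    GaussianFourier.integral_rexp_neg_mul_sq_norm (by norm_num : (0 : ℝ) < 1 / 2),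
    show π / (1 / 2) = 2 * π by ring, ← rpow_add (by positivity)]
  ring_nf
  exact rpow_zero _

theorem integrable_stdGaussianPDF : Integrable (stdGaussianPDF (V := V)) :=
  .of_integral_ne_zero (by simp [integral_stdGaussianPDF])

end StdGaussian

theorem addHaar_setOf_norm_sq_eq {V : Type*} [NormedAddCommGroup V] [NormedSpace ℝ V]
    [MeasurableSpace V] [BorelSpace V] [FiniteDimensional ℝ V] [Nontrivial V] (μ : Measure V)
    [μ.IsAddHaarMeasure] (t : ℝ) : μ {x | ‖x‖ ^ 2 = t} = 0 :=
  measure_mono_null (fun x hx => by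
      rw [mem_sphere_zero_iff_norm, ← mem_ofPred.1 hx, sqrt_sq (norm_nonneg x)])
    (Measure.addHaar_sphere μ 0 √t)

theorem Matrix.PosDef.exists_sq_det_eq_and_mulVec_dotProduct_inv {n : Type*} [Fintype n]
    [DecidableEq n] {S : Matrix n n ℝ} (hS : S.PosDef) :
    ∃ B : Matrix n n ℝ, B.det ^ 2 = S.det ∧ ∀ v, B *ᵥ v ⬝ᵥ S⁻¹ *ᵥ (B *ᵥ v) = v ⬝ᵥ v := by
  open scoped MatrixOrder in
  obtain ⟨B, hB, hBB⟩ : ∃ B : Matrix n n ℝ, B.PosSemidef ∧ B * B = S :=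
    ⟨CFC.sqrt S, (CFC.sqrt_nonneg S).posSemidef, CFC.sqrt_mul_sqrt_self S hS.posSemidef.nonneg⟩
  have hdet : B.det ^ 2 = S.det := by rw [← hBB, det_mul, sq]
  have hB_unit : IsUnit B.det := isUnit_iff_ne_zero.2 fun h => by
    simpa [← hdet, h] using hS.det_pos
  refine ⟨B, hdet, fun v => ?_⟩
  have hBt : Bᵀ = B := hB.isHermitian
  have hBSB : B * S⁻¹ * B = 1 := by
    rw [← hBB, mul_inv_rev, ← Matrix.mul_assoc, mul_nonsing_inv _ hB_unit, Matrix.one_mul,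
      nonsing_inv_mul _ hB_unit]
  calc B *ᵥ v ⬝ᵥ S⁻¹ *ᵥ (B *ᵥ v) = v ⬝ᵥ (B * S⁻¹ * B) *ᵥ v := by
        rw [← mulVec_mulVec, ← mulVec_mulVec, dotProduct_mulVec v B, ← mulVec_transpose, hBt]
    _ = v ⬝ᵥ v := by rw [hBSB, one_mulVec]

section Gaussian

variable {ι : Type*} [Fintype ι] [DecidableEq ι]

noncomputable def mahalanobisSq (θ : EuclideanSpace ℝ ι) (S : Matrix ι ι ℝ)
    (z : EuclideanSpace ℝ ι) : ℝ :=
  (fun i => z i - θ i) ⬝ᵥ S⁻¹ *ᵥ (fun i => z i - θ i)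

noncomputable def gaussianPDF (θ : EuclideanSpace ℝ ι) (S : Matrix ι ι ℝ)
    (z : EuclideanSpace ℝ ι) : ℝ :=
  (2 * π) ^ (-(Fintype.card ι : ℝ) / 2) * S.det ^ (-(1 : ℝ) / 2) *
    exp (-(1 / 2) * mahalanobisSq θ S z)

theorem Matrix.PosDef.exists_continuousLinearEquiv_mahalanobisSq {S : Matrix ι ι ℝ}
    (hS : S.PosDef) (θ : EuclideanSpace ℝ ι) :
    ∃ L : EuclideanSpace ℝ ι ≃L[ℝ] EuclideanSpace ℝ ι,
      (∀ x, |(L : EuclideanSpace ℝ ι →L[ℝ] EuclideanSpace ℝ ι).det| *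
        gaussianPDF θ S (θ + L x) = stdGaussianPDF x) ∧
      ∀ x, mahalanobisSq θ S (θ + L x) = ‖x‖ ^ 2 := by
  obtain ⟨B, hdet, hB⟩ := hS.exists_sq_det_eq_and_mulVec_dotProduct_inv
  have hdetB : (toEuclideanCLM (𝕜 := ℝ) B).det = B.det := LinearMap.det_toLpLin 2 B
  have hB_det_ne : B.det ≠ 0 := fun h => by simpa [← hdet, h] using hS.det_pos
  set L := (toEuclideanCLM (𝕜 := ℝ) B).toContinuousLinearEquivOfDetNeZero (hdetB ▸ hB_det_ne)
  have hM : ∀ x, mahalanobisSq θ S (θ + L x) = ‖x‖ ^ 2 := by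
    intro x
    have hsub : (fun i => (θ + L x) i - θ i) = B *ᵥ WithLp.ofLp x := by
      ext i; simp [L]
    rw [mahalanobisSq, hsub, hB, EuclideanSpace.real_norm_sq_eq]
    simp [dotProduct, sq]
  refine ⟨L, fun x => ?_, hM⟩
  have habs :
      |(L : EuclideanSpace ℝ ι →L[ℝ] EuclideanSpace ℝ ι).det| = S.det ^ ((1 : ℝ) / 2) := by
    rw [← sqrt_eq_rpow, ← hdet, sqrt_sq_eq_abs, ← hdetB]
    simp [L]
  have hdet_rpow : S.det ^ ((1 : ℝ) / 2) * S.det ^ (-(1 : ℝ) / 2) = 1 := by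
    rw [← rpow_add hS.det_pos]; norm_num
  rw [gaussianPDF, stdGaussianPDF, hM, habs, finrank_euclideanSpace]
  linear_combination (2 * π) ^ (-(Fintype.card ι : ℝ) / 2) * exp (-(1 / 2) * ‖x‖ ^ 2) * hdet_rpow

theorem continuous_gaussianPDF (θ : EuclideanSpace ℝ ι) (S : Matrix ι ι ℝ) :
    Continuous (gaussianPDF θ S) := by
  unfold gaussianPDF mahalanobisSq
  simp only [dotProduct, mulVec]
  fun_prop

theorem Matrix.PosDef.exists_pos_superlevel_gaussianPDF_eq {S : Matrix ι ι ℝ} (hS : S.PosDef)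
    (θ : EuclideanSpace ℝ ι) (t : ℝ) :
    ∃ c > 0, {z | c ≤ gaussianPDF θ S z} = {z | mahalanobisSq θ S z ≤ t} := by
  have hK : 0 < (2 * π) ^ (-(Fintype.card ι : ℝ) / 2) * S.det ^ (-(1 : ℝ) / 2) := by
    have := hS.det_pos; positivity
  refine ⟨_, mul_pos hK (exp_pos (-(1 / 2) * t)), ?_⟩
  ext z
  simp only [mem_ofPred, gaussianPDF, mul_le_mul_iff_right₀ hK, exp_le_exp]
  constructor <;> intro h <;> linarith

theorem Matrix.PosDef.setIntegral_gaussianPDF_sublevel {S : Matrix ι ι ℝ} (hS : S.PosDef)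
    (θ : EuclideanSpace ℝ ι) (t : ℝ) :
    ∫ z in {z | mahalanobisSq θ S z ≤ t}, gaussianPDF θ S z =
      ∫ x in {x : EuclideanSpace ℝ ι | ‖x‖ ^ 2 ≤ t}, stdGaussianPDF x := by
  obtain ⟨L, hpdf, hM⟩ := hS.exists_continuousLinearEquiv_mahalanobisSq θ
  have himage : {z | mahalanobisSq θ S z ≤ t} = (θ + L ·) '' {x | ‖x‖ ^ 2 ≤ t} := by
    ext z
    refine ⟨fun hz => ⟨L.symm (z - θ), ?_, by simp⟩, ?_⟩
    · rw [mem_ofPred, ← hM]; simpa using hz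
    · rintro ⟨x, hx, rfl⟩
      rwa [mem_ofPred, hM]
  rw [himage, setIntegral_image_add_continuousLinearEquiv volume L θ
    (measurableSet_le (by fun_prop) measurable_const)]
  simp_rw [smul_eq_mul, hpdf]

theorem Matrix.PosDef.integrable_gaussianPDF {S : Matrix ι ι ℝ} (hS : S.PosDef)
    (θ : EuclideanSpace ℝ ι) : Integrable (gaussianPDF θ S) := by
  obtain ⟨L, hpdf, -⟩ := hS.exists_continuousLinearEquiv_mahalanobisSq θ
  rw [← integrableOn_univ, ← image_univ_of_surjective (f := (θ + L ·))
    ((add_left_surjective θ).comp L.surjective),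
    integrableOn_image_add_continuousLinearEquiv_iff volume L θ MeasurableSet.univ]
  simp_rw [smul_eq_mul, hpdf]
  exact integrable_stdGaussianPDF.integrableOn

end Gaussian

/-- Among all measurable sets of Gaussian probability at least `1 − p_e`, an
ellipsoid `{φ : (φ−θ̂)ᵀ Σ⁻¹ (φ−θ̂) ≤ t}` of exact probability `1 − p_e` has
minimal Lebesgue measure. The Gaussian `N(θ̂, Σ)` is given by its density `pdf`
with respect to Lebesgue measure. -/
theorem stmt15 (d : ℕ) (hd : 0 < d) (Sig : Matrix (Fin d) (Fin d) ℝ)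
    (hSig : Sig.PosDef) (pe : ℝ) (hpe : pe ∈ Set.Ioo (0 : ℝ) 1)
    (θhat : EuclideanSpace ℝ (Fin d))
    (pdf : EuclideanSpace ℝ (Fin d) → ℝ)
    (hpdf : ∀ z, pdf z = (2 * Real.pi) ^ (-(d : ℝ) / 2) * Sig.det ^ (-(1:ℝ) / 2)
      * Real.exp (-(1 / 2) *
          ((fun i => z i - θhat i) ⬝ᵥ Sig⁻¹.mulVec (fun i => z i - θhat i)))) :
    ∃ t : ℝ,
      (∫ z in {z : EuclideanSpace ℝ (Fin d) |
          (fun i => z i - θhat i) ⬝ᵥ Sig⁻¹.mulVec (fun i => z i - θhat i) ≤ t},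
          pdf z) = 1 - pe ∧
      ∀ S : Set (EuclideanSpace ℝ (Fin d)), MeasurableSet S →
        1 - pe ≤ (∫ z in S, pdf z) →
        MeasureTheory.volume
            {z : EuclideanSpace ℝ (Fin d) |
              (fun i => z i - θhat i) ⬝ᵥ Sig⁻¹.mulVec (fun i => z i - θhat i) ≤ t}
          ≤ MeasureTheory.volume S := by
  have : Nonempty (Fin d) := ⟨⟨0, hd⟩⟩
  obtain rfl : pdf = gaussianPDF θhat Sig := funext fun z => by
    rw [hpdf, gaussianPDF, mahalanobisSq, Fintype.card_fin]
  obtain ⟨t, ht⟩ := exists_setIntegral_sublevel_eq (μ := volume)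
    (q := fun x : EuclideanSpace ℝ (Fin d) => ‖x‖ ^ 2) (by fun_prop)
    (addHaar_setOf_norm_sq_eq volume) integrable_stdGaussianPDF (fun x => sq_nonneg ‖x‖)
    (by linarith [hpe.2] : 0 ≤ 1 - pe) (by rw [integral_stdGaussianPDF]; linarith [hpe.1])
  refine ⟨t, (hSig.setIntegral_gaussianPDF_sublevel θhat t).trans ht, fun S hS hS_prob => ?_⟩
  obtain ⟨c, hc, hsuper⟩ := hSig.exists_pos_superlevel_gaussianPDF_eq θhat t
  change volume {z | mahalanobisSq θhat Sig z ≤ t} ≤ volume S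
  rw [← hsuper]
  refine measure_superlevel_le_of_setIntegral_le (hSig.integrable_gaussianPDF θhat)
    (continuous_gaussianPDF θhat Sig).measurable hc hS ?_
  rwa [hsuper, hSig.setIntegral_gaussianPDF_sublevel θhat t, ht]
end

section
/- For d > 0 and p_e → 0⁺, the solution δ_d(p_e) of Γ(d/2, δ) = p_e·Γ(d/2) (upper incomplete Gamma) satisfies δ_d(p_e) = ln(1/p_e) + ((d/2) − 1)·ln ln(1/p_e) + O(1); in particular δ_d(p_e)/ln(1/p_e) → 1 as p_e → 0. -/
open Real MeasureTheory Filter Asymptotics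
open Set Topology

/-!
Bounding the integrand on `(x, ∞)` by `x ^ (s - 1) e^{-x} e^{-(t - x)/2}` from above (valid once
`x ≥ 2 (s - 1)`) and keeping only `(x, x + 1]` from below gives
`log Γ(s, x) = (s - 1) log x - x + O(1)`. Since `Γ(s, δ) = p Γ(s) → 0` forces `δ → ∞`, this reads
`δ - (s - 1) log δ = log (1/p) + O(1)`. Then `δ ~ log (1/p)`, so `log δ = log log (1/p) + o(1)`,
and substituting this back gives the expansion.
-/

noncomputable def upperIncompleteGamma (s x : ℝ) : ℝ :=
  ∫ t in Ioi x, t ^ (s - 1) * exp (-t)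

section UpperIncompleteGamma

variable {s : ℝ}

lemma integrableOn_rpow_mul_exp_neg_Ioi (hs : 0 < s) {x : ℝ} (hx : 0 ≤ x) :
    IntegrableOn (fun t : ℝ => t ^ (s - 1) * exp (-t)) (Ioi x) :=
  ((GammaIntegral_convergent hs).mono_set (Ioi_subset_Ioi hx)).congr_fun
    (fun _ _ => mul_comm _ _) measurableSet_Ioi

lemma upperIncompleteGamma_le_of_le (hs : 0 < s) {x y : ℝ} (hx : 0 ≤ x) (hxy : x ≤ y) :
    upperIncompleteGamma s y ≤ upperIncompleteGamma s x := by
  refine setIntegral_mono_set (integrableOn_rpow_mul_exp_neg_Ioi hs hx) ?_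
    (Ioi_subset_Ioi hxy).eventuallyLE
  filter_upwards [ae_restrict_mem measurableSet_Ioi] with t ht
  exact mul_nonneg (rpow_nonneg (hx.trans ht.le) _) (exp_pos _).le

lemma rpow_le_rpow_mul_exp_half {x t : ℝ} (hx : 0 < x) (hsx : 2 * (s - 1) ≤ x) (hxt : x ≤ t) :
    t ^ (s - 1) ≤ x ^ (s - 1) * exp ((t - x) / 2) := by
  rcases le_or_gt s 1 with hs1 | hs1
  · calc t ^ (s - 1) ≤ x ^ (s - 1) := rpow_le_rpow_of_nonpos hx hxt (by linarith)
      _ ≤ x ^ (s - 1) * exp ((t - x) / 2) :=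
        le_mul_of_one_le_right (by positivity) (one_le_exp (by linarith))
  · have hratio : (t / x) ^ (s - 1) ≤ exp ((t - x) / 2) := by
      calc (t / x) ^ (s - 1) ≤ exp (t / x - 1) ^ (s - 1) :=
            rpow_le_rpow (div_pos (hx.trans_le hxt) hx).le
              (by linarith [add_one_le_exp (t / x - 1)]) (by linarith)
        _ = exp ((s - 1) * ((t - x) / x)) := by
            rw [← exp_mul, div_sub_one hx.ne', mul_comm]
        _ ≤ exp ((t - x) / 2) := by
            gcongr
            rw [mul_div_assoc', div_le_div_iff₀ hx two_pos]
            nlinarith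
    calc t ^ (s - 1) = x ^ (s - 1) * (t / x) ^ (s - 1) := by
          rw [← mul_rpow hx.le (div_pos (hx.trans_le hxt) hx).le, mul_div_cancel₀ _ hx.ne']
      _ ≤ x ^ (s - 1) * exp ((t - x) / 2) := by gcongr

lemma upperIncompleteGamma_le (hs : 0 < s) {x : ℝ} (hx : 0 < x) (hsx : 2 * (s - 1) ≤ x) :
    upperIncompleteGamma s x ≤ 2 * (x ^ (s - 1) * exp (-x)) := by
  have hbound : ∀ t ∈ Ioi x,
      t ^ (s - 1) * exp (-t) ≤ x ^ (s - 1) * exp (-(x / 2)) * exp (-(1 / 2) * t) := by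
    intro t ht
    calc t ^ (s - 1) * exp (-t) ≤ x ^ (s - 1) * exp ((t - x) / 2) * exp (-t) := by
          gcongr
          exact rpow_le_rpow_mul_exp_half hx hsx (le_of_lt ht)
      _ = x ^ (s - 1) * exp (-(x / 2)) * exp (-(1 / 2) * t) := by
          rw [mul_assoc, mul_assoc, ← exp_add, ← exp_add]
          ring_nf
  calc upperIncompleteGamma s x
      ≤ ∫ t in Ioi x, x ^ (s - 1) * exp (-(x / 2)) * exp (-(1 / 2) * t) :=
        setIntegral_mono_on (integrableOn_rpow_mul_exp_neg_Ioi hs hx.le)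
          ((integrableOn_exp_mul_Ioi (by norm_num) x).const_mul _) measurableSet_Ioi hbound
    _ = 2 * (x ^ (s - 1) * exp (-x)) := by
        rw [integral_const_mul, integral_exp_mul_Ioi (by norm_num)]
        have hexp : exp (-(x / 2)) * exp (-(1 / 2) * x) = exp (-x) := by
          rw [← exp_add]; ring_nf
        linear_combination (2 * x ^ (s - 1)) * hexp

lemma min_one_two_rpow_mul_rpow_le (a : ℝ) {x t : ℝ} (hx : 0 < x) (hxt : x ≤ t)
    (ht : t ≤ 2 * x) : min 1 (2 ^ a) * x ^ a ≤ t ^ a := by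
  rcases le_or_gt 0 a with ha | ha
  · calc min 1 (2 ^ a) * x ^ a ≤ 1 * x ^ a := by gcongr; exact min_le_left _ _
      _ ≤ t ^ a := by rw [one_mul]; exact rpow_le_rpow hx.le hxt ha
  · calc min 1 (2 ^ a) * x ^ a ≤ 2 ^ a * x ^ a := by gcongr; exact min_le_right _ _
      _ = (2 * x) ^ a := (mul_rpow zero_le_two hx.le).symm
      _ ≤ t ^ a := rpow_le_rpow_of_nonpos (hx.trans_le hxt) ht ha.le

lemma exists_pos_mul_le_upperIncompleteGamma (hs : 0 < s) :
    ∃ c > 0, ∀ x ≥ 1, c * (x ^ (s - 1) * exp (-x)) ≤ upperIncompleteGamma s x := by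
  refine ⟨min 1 (2 ^ (s - 1)) * exp (-1), by positivity, fun x hx => ?_⟩
  have hx0 : 0 < x := one_pos.trans_le hx
  have hbound : ∀ t ∈ Ioc x (x + 1),
      min 1 (2 ^ (s - 1)) * exp (-1) * (x ^ (s - 1) * exp (-x)) ≤ t ^ (s - 1) * exp (-t) := by
    intro t ⟨hxt, htx⟩
    calc min 1 (2 ^ (s - 1)) * exp (-1) * (x ^ (s - 1) * exp (-x))
        = (min 1 (2 ^ (s - 1)) * x ^ (s - 1)) * exp (-(x + 1)) := by
          rw [neg_add, exp_add]; ring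
      _ ≤ t ^ (s - 1) * exp (-t) :=
          mul_le_mul (min_one_two_rpow_mul_rpow_le _ hx0 hxt.le (by linarith))
            (exp_le_exp.2 (by linarith)) (exp_pos _).le (rpow_nonneg (hx0.trans hxt).le _)
  calc min 1 (2 ^ (s - 1)) * exp (-1) * (x ^ (s - 1) * exp (-x))
      ≤ ∫ t in Ioc x (x + 1), t ^ (s - 1) * exp (-t) := by
        simpa using setIntegral_ge_of_const_le_real measurableSet_Ioc (by simp) hbound
          ((integrableOn_rpow_mul_exp_neg_Ioi hs hx0.le).mono_set Ioc_subset_Ioi_self)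
    _ ≤ upperIncompleteGamma s x := by
        refine setIntegral_mono_set (integrableOn_rpow_mul_exp_neg_Ioi hs hx0.le) ?_
          Ioc_subset_Ioi_self.eventuallyLE
        filter_upwards [ae_restrict_mem measurableSet_Ioi] with t ht
        exact mul_nonneg (rpow_nonneg (hx0.le.trans ht.le) _) (exp_pos _).le

theorem isBigO_log_upperIncompleteGamma (hs : 0 < s) :
    (fun x => log (upperIncompleteGamma s x) - ((s - 1) * log x - x)) =O[atTop]
      fun _ => (1 : ℝ) := by
  obtain ⟨c, hc, hc_le⟩ := exists_pos_mul_le_upperIncompleteGamma hs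
  refine IsBigO.of_bound (max |log c| |log 2|) ?_
  filter_upwards [eventually_ge_atTop (max 1 (2 * (s - 1)))] with x hx
  have hx1 : 1 ≤ x := le_of_max_le_left hx
  have hx0 : 0 < x := one_pos.trans_le hx1
  have hf : 0 < x ^ (s - 1) * exp (-x) := by positivity
  have hlower := hc_le x hx1
  have hupper := upperIncompleteGamma_le hs hx0 (le_of_max_le_right hx)
  have hγ : 0 < upperIncompleteGamma s x := (mul_pos hc hf).trans_le hlower
  have hlogf : log (x ^ (s - 1) * exp (-x)) = (s - 1) * log x - x := by
    rw [log_mul (by positivity) (by positivity), log_rpow hx0, log_exp]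
    ring
  rw [norm_one, mul_one, norm_eq_abs, ← hlogf, ← log_div hγ.ne' hf.ne']
  apply abs_le_max_abs_abs
  · exact log_le_log hc ((le_div_iff₀ hf).2 hlower)
  · exact log_le_log (div_pos hγ hf) ((div_le_iff₀ hf).2 hupper)

theorem tendsto_atTop_of_tendsto_upperIncompleteGamma {α : Type*} {l : Filter α} {x : α → ℝ}
    (hs : 0 < s) (hx : ∀ᶠ i in l, 0 ≤ x i)
    (h : Tendsto (fun i => upperIncompleteGamma s (x i)) l (𝓝 0)) : Tendsto x l atTop := by
  obtain ⟨c, hc, hlower⟩ := exists_pos_mul_le_upperIncompleteGamma hs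
  refine tendsto_atTop.2 fun b => ?_
  have hpos : 0 < upperIncompleteGamma s (max b 1) :=
    lt_of_lt_of_le (by positivity) (hlower _ (le_max_right _ _))
  filter_upwards [hx, h.eventually (gt_mem_nhds hpos)] with i hxi hlt
  by_contra! hxb
  exact hlt.not_ge (upperIncompleteGamma_le_of_le hs hxi (hxb.le.trans (le_max_left _ _)))

end UpperIncompleteGamma

section InvertSubMulLog

variable {α : Type*} {l : Filter α} {x L : α → ℝ} {a : ℝ}

/-- Since `log x = o(x)`, the relation `L = x - a log x + O(1)` forces `x ~ L`. -/
theorem tendsto_div_of_isBigO_sub_mul_log (hx : Tendsto x l atTop)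
    (h : (fun i => x i - a * log (x i) - L i) =O[l] fun _ => (1 : ℝ)) :
    Tendsto (fun i => x i / L i) l (𝓝 1) := by
  have hone : (fun _ => (1 : ℝ)) =o[l] x :=
    (isLittleO_one_left_iff ℝ).2 (tendsto_norm_atTop_atTop.comp hx)
  have hlog : (fun i => log (x i)) =o[l] x := isLittleO_log_id_atTop.comp_tendsto hx
  have hequiv : L ~[l] x :=
    ((h.trans_isLittleO hone).neg_left.sub (hlog.const_mul_left a)).congr_left
      fun i => by simp only [Pi.sub_apply]; ring
  have hLx : Tendsto (fun i => L i / x i) l (𝓝 1) :=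
    (isEquivalent_iff_tendsto_one (hx.eventually_ne_atTop 0)).1 hequiv
  simpa only [inv_div, inv_one] using hLx.inv₀ one_ne_zero

theorem isBigO_sub_sub_mul_log_of_isBigO_sub_mul_log (hx : Tendsto x l atTop)
    (h : (fun i => x i - a * log (x i) - L i) =O[l] fun _ => (1 : ℝ)) :
    (fun i => x i - L i - a * log (L i)) =O[l] fun _ => (1 : ℝ) := by
  have hratio := tendsto_div_of_isBigO_sub_mul_log hx h
  have hlog_ratio : Tendsto (fun i => log (x i / L i)) l (𝓝 0) := by
    simpa only [log_one, Function.comp_def] using (continuousAt_log one_ne_zero).tendsto.comp hratio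
  have hL : ∀ᶠ i in l, L i ≠ 0 :=
    (hratio.eventually_ne one_ne_zero).mono fun i hi hLi => hi (by rw [hLi, div_zero])
  refine (h.add ((hlog_ratio.isBigO_one ℝ).const_mul_left a)).congr' ?_ EventuallyEq.rfl
  filter_upwards [hx.eventually_ne_atTop 0, hL] with i hxi hLi
  rw [log_div hxi hLi]
  ring

end InvertSubMulLog

/-- Asymptotics of `δ_d(p_e)` as `p_e → 0⁺`: if `δ_d` solves the upper incomplete
Gamma equation `Γ(d/2, δ_d(p)) = p·Γ(d/2)`, then
`δ_d(p) = ln(1/p) + (d/2 − 1)·ln ln(1/p) + O(1)`; in particular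
`δ_d(p)/ln(1/p) → 1`. -/
theorem stmt17 (d : ℝ) (hd : 0 < d) (δd : ℝ → ℝ)
    (hpos : ∀ p ∈ Set.Ioo (0 : ℝ) 1, 0 < δd p)
    (hdef : ∀ p ∈ Set.Ioo (0 : ℝ) 1,
      (∫ t in Set.Ioi (δd p), t ^ (d / 2 - 1) * Real.exp (-t))
        = p * Real.Gamma (d / 2)) :
    (fun p : ℝ => δd p - Real.log (1 / p)
        - (d / 2 - 1) * Real.log (Real.log (1 / p)))
      =O[nhdsWithin 0 (Set.Ioi 0)] (fun _ : ℝ => (1 : ℝ)) ∧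
    Filter.Tendsto (fun p : ℝ => δd p / Real.log (1 / p))
      (nhdsWithin 0 (Set.Ioi 0)) (nhds 1) := by
  have hs : 0 < d / 2 := half_pos hd
  have hmem : ∀ᶠ p in 𝓝[>] 0, p ∈ Ioo (0 : ℝ) 1 := Ioo_mem_nhdsGT one_pos
  have hγ : ∀ᶠ p in 𝓝[>] 0, upperIncompleteGamma (d / 2) (δd p) = p * Gamma (d / 2) :=
    hmem.mono hdef
  have htop : Tendsto δd (𝓝[>] 0) atTop := by
    refine tendsto_atTop_of_tendsto_upperIncompleteGamma hs
      (hmem.mono fun p hp => (hpos p hp).le) ?_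
    refine (tendsto_congr' hγ).2 ?_
    have hlim : Tendsto (fun p : ℝ => p * Gamma (d / 2)) (𝓝 0) (𝓝 0) := by
      simpa using (tendsto_id (x := 𝓝 (0 : ℝ))).mul_const (Gamma (d / 2))
    exact hlim.mono_left nhdsWithin_le_nhds
  have hasymp : (fun p => δd p - (d / 2 - 1) * log (δd p) - log (1 / p)) =O[𝓝[>] 0]
      fun _ => (1 : ℝ) := by
    refine (((isBigO_log_upperIncompleteGamma hs).comp_tendsto htop).sub
      (isBigO_const_one ℝ (log (Gamma (d / 2))) _)).congr' ?_ EventuallyEq.rfl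
    filter_upwards [hmem, hγ] with p hp hpγ
    rw [Function.comp_apply, hpγ, log_mul hp.1.ne' (Gamma_pos_of_pos hs).ne', one_div, log_inv]
    ring
  exact ⟨isBigO_sub_sub_mul_log_of_isBigO_sub_mul_log htop hasymp,
    tendsto_div_of_isBigO_sub_mul_log htop hasymp⟩
end
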